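/- Deterministic right-invariant error dynamics (noise-free core of Lemma 3): let M = diag(I₃, 0₂) and let N be the 5×5 matrix whose only nonzero entry is a 1 in row 5, column 4. Let v_g be a fixed 5×5 real matrix and v_b : ℝ → ℝ^{5×5} any matrix-valued function. Suppose X, Y : ℝ → ℝ^{5×5} are differentiable, take values in matrices of the block form [[R, p, v], [0_{2×3}, I₂]] with R invertible, and satisfy X′(t) = X(t)·v_b(t) + v_g·X(t) + M·X(t)·N and Y′(t) = Y(t)·v_b(t) + v_g·Y(t) + M·Y(t)·N for all t. Then η(t) := X(t)·Y(t)⁻¹ is differentiable and satisfies η′(t) = v_g·η(t) − η(t)·v_g + M·η(t)·N for all t. -/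

import Mathlib

open Matrix

def colPair (p v : Fin 3 → ℝ) : Matrix (Fin 3) (Fin 2) ℝ :=
  Matrix.of fun i j => ![p i, v i] j

/-- The `SE₂(3)`-shaped 5×5 block matrix `[[R, p, v], [0, I₂]]`
(indexed by `Fin 3 ⊕ Fin 2`). -/
def se23 (R : Matrix (Fin 3) (Fin 3) ℝ) (p v : Fin 3 → ℝ) :
    Matrix (Fin 3 ⊕ Fin 2) (Fin 3 ⊕ Fin 2) ℝ :=
  Matrix.fromBlocks R (colPair p v) 0 1

/-- `M = diag(I₃, 0₂)`. -/
def Mmat : Matrix (Fin 3 ⊕ Fin 2) (Fin 3 ⊕ Fin 2) ℝ :=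
  Matrix.fromBlocks 1 0 0 0

/-- `N`: the 5×5 matrix whose only nonzero entry is a `1` in row 5, column 4. -/
def Nmat : Matrix (Fin 3 ⊕ Fin 2) (Fin 3 ⊕ Fin 2) ℝ :=
  Matrix.fromBlocks 0 0 0 !![0, 0; 1, 0]

/-!
Writing `P = diag(0₃, I₂) = 1 - M`, a matrix `A` has the `SE₂(3)` block shape exactly when
`P A = P`, and `N = P N = N P`. Hence `M A N = A N - N` for every such `A`, and `N Y⁻¹ = N`.
Substituting this into the quotient rule `η̇ = Ẋ Y⁻¹ - η Ẏ Y⁻¹`, the input terms `X v_b Y⁻¹`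
and the terms `X N Y⁻¹` cancel, leaving `v_g η - η v_g + η N - N = v_g η - η v_g + M η N`.
-/

section MatrixCalculus

attribute [local instance] Matrix.linftyOpNormedRing Matrix.linftyOpNormedAlgebra

variable {n : Type*} [Fintype n] [DecidableEq n] {f g : ℝ → Matrix n n ℝ} {f' g' : Matrix n n ℝ}
  {t : ℝ}

theorem hasDerivAt_matrix_iff :
    HasDerivAt f f' t ↔ ∀ i j, HasDerivAt (fun s => f s i j) (f' i j) t := by
  refine hasDerivAt_iff_tendsto_slope.trans ?_
  simp only [hasDerivAt_iff_tendsto_slope]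
  exact (tendsto_pi_nhds (A := fun _ : n => n → ℝ)).trans
    (forall_congr' fun i => tendsto_pi_nhds (A := fun _ : n => ℝ))

theorem HasDerivAt.matrix_inv (hf : HasDerivAt f f' t) (ht : IsUnit (f t).det) :
    HasDerivAt (fun s => (f s)⁻¹) (-((f t)⁻¹ * f' * (f t)⁻¹)) t := by
  obtain ⟨u, hu⟩ := (isUnit_iff_isUnit_det _).2 ht
  have hinv := (hu ▸ hasFDerivAt_ringInverse (𝕜 := ℝ) u).comp_hasDerivAt t hf
  rw [show (fun s => (f s)⁻¹) = Ring.inverse ∘ f from funext fun s => nonsing_inv_eq_ringInverse _]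
  refine hinv.congr_deriv ?_
  rw [← hu, nonsing_inv_eq_ringInverse, Ring.inverse_unit, _root_.neg_apply,
    ContinuousLinearMap.mulLeftRight_apply]

theorem HasDerivAt.matrix_mul_inv (hf : HasDerivAt f f' t) (hg : HasDerivAt g g' t)
    (ht : IsUnit (g t).det) :
    HasDerivAt (fun s => f s * (g s)⁻¹) (f' * (g t)⁻¹ - f t * (g t)⁻¹ * g' * (g t)⁻¹) t := by
  have hfg := hf.fun_mul (hg.matrix_inv ht)
  rwa [mul_neg, ← sub_eq_add_neg, ← Matrix.mul_assoc (f t), ← Matrix.mul_assoc (f t)] at hfg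

end MatrixCalculus

section RightInvariantError

variable {R : Type*} [Ring R] {M P N : R}

theorem mul_mul_eq_mul_sub (hMP : M + P = 1) (hPN : P * N = N) {A : R} (hA : P * A = P) :
    M * A * N = A * N - N := by
  rw [eq_sub_of_add_eq hMP, sub_mul, sub_mul, one_mul, hA, hPN]

theorem right_invariant_error_derivative_eq (hMP : M + P = 1) (hPN : P * N = N)
    (hNP : N * P = N) {X Y Z : R} (hX : P * X = P) (hY : P * Y = P) (hYZ : Y * Z = 1)
    (hZY : Z * Y = 1) (vg vb : R) :
    (X * vb + vg * X + M * X * N) * Z - X * Z * (Y * vb + vg * Y + M * Y * N) * Z =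
      vg * (X * Z) - X * Z * vg + M * (X * Z) * N := by
  have hPZ : P * Z = P := by rw [← hY, mul_assoc, hYZ, mul_one, hY]
  have hNZ : N * Z = N := by rw [← hNP, mul_assoc, hPZ]
  have hZY' : ∀ A, Z * (Y * A) = A := fun A => by rw [← mul_assoc, hZY, one_mul]
  have hPXZ : P * (X * Z) = P := by rw [← mul_assoc, hX, hPZ]
  rw [mul_mul_eq_mul_sub hMP hPN hX, mul_mul_eq_mul_sub hMP hPN hY,
    mul_mul_eq_mul_sub hMP hPN hPXZ]
  simp only [add_mul, mul_add, sub_mul, mul_sub, mul_assoc, hZY', hNZ, hYZ, mul_one]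
  abel

end RightInvariantError

def Pmat : Matrix (Fin 3 ⊕ Fin 2) (Fin 3 ⊕ Fin 2) ℝ :=
  fromBlocks 0 0 0 1

theorem Mmat_add_Pmat : Mmat + Pmat = 1 := by
  rw [Mmat, Pmat, fromBlocks_add]
  simp [fromBlocks_one]

theorem Pmat_mul_Nmat : Pmat * Nmat = Nmat := by
  simp [Pmat, Nmat, fromBlocks_multiply]

theorem Nmat_mul_Pmat : Nmat * Pmat = Nmat := by
  simp [Pmat, Nmat, fromBlocks_multiply]

theorem Pmat_mul_se23 (R : Matrix (Fin 3) (Fin 3) ℝ) (p v : Fin 3 → ℝ) :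
    Pmat * se23 R p v = Pmat := by
  simp [Pmat, se23, fromBlocks_multiply]

theorem isUnit_det_se23 {R : Matrix (Fin 3) (Fin 3) ℝ} (hR : IsUnit R.det) (p v : Fin 3 → ℝ) :
    IsUnit (se23 R p v).det := by
  rwa [se23, det_fromBlocks_zero₂₁, det_one, mul_one]

/-- Noise-free core of Lemma 3: if `X` and `Y` both solve the IMU kinematics
`Ẋ = X v_b + v_g X + M X N` (entrywise derivatives) and take `SE₂(3)`-shaped values
with invertible rotation blocks, then the right-invariant error `η = X Y⁻¹` satisfies
`η̇ = v_g η − η v_g + M η N`. -/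
theorem right_invariant_error_dynamics
    (vg : Matrix (Fin 3 ⊕ Fin 2) (Fin 3 ⊕ Fin 2) ℝ)
    (vb : ℝ → Matrix (Fin 3 ⊕ Fin 2) (Fin 3 ⊕ Fin 2) ℝ)
    (X Y : ℝ → Matrix (Fin 3 ⊕ Fin 2) (Fin 3 ⊕ Fin 2) ℝ)
    (hXform : ∀ t, ∃ R p v, IsUnit (Matrix.det R) ∧ X t = se23 R p v)
    (hYform : ∀ t, ∃ R p v, IsUnit (Matrix.det R) ∧ Y t = se23 R p v)
    (hX : ∀ t i j, HasDerivAt (fun s => X s i j)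
      ((X t * vb t + vg * X t + Mmat * X t * Nmat) i j) t)
    (hY : ∀ t i j, HasDerivAt (fun s => Y s i j)
      ((Y t * vb t + vg * Y t + Mmat * Y t * Nmat) i j) t) :
    ∀ t i j, HasDerivAt (fun s => (X s * (Y s)⁻¹) i j)
      ((vg * (X t * (Y t)⁻¹) - (X t * (Y t)⁻¹) * vg +
        Mmat * (X t * (Y t)⁻¹) * Nmat) i j) t := by
  intro t
  obtain ⟨RX, pX, vX, -, hXt⟩ := hXform t
  obtain ⟨RY, pY, vY, hRY, hYt⟩ := hYform t
  have hdet : IsUnit (Y t).det := hYt ▸ isUnit_det_se23 hRY pY vY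
  have hη := (hasDerivAt_matrix_iff.2 (hX t)).matrix_mul_inv (hasDerivAt_matrix_iff.2 (hY t)) hdet
  rw [right_invariant_error_derivative_eq Mmat_add_Pmat Pmat_mul_Nmat Nmat_mul_Pmat
    (hXt ▸ Pmat_mul_se23 RX pX vX) (hYt ▸ Pmat_mul_se23 RY pY vY) (mul_nonsing_inv _ hdet)
    (nonsing_inv_mul _ hdet)] at hη
  exact hasDerivAt_matrix_iff.1 hη
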